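/- Let X be a d-representable simplicial complex on vertex set V (the nerve of a family of compact convex sets in ℝ^d), and let σ₁, σ₂ ⊆ V with σ₁ ∩ σ₂ ∈ X. Then the complex X' = X ∪ 2^{σ₁} ∪ 2^{σ₂} (adding all subsets of σ₁ and all subsets of σ₂ as faces) is (d+1)-representable. -/

import Mathlib

/-!
Realize `X` by compact convex sets `C v ⊆ ℝ^d`, pick `p ∈ ⋂_{v ∈ σ₁ ∩ σ₂} C v` and view `ℝ^d` as
the hyperplane `t = 0` of `ℝ^d × ℝ ≅ ℝ^{d+1}`. Replace `C v` by the convex hull of `C v × {0}`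
together with the apex `(p, 1)` if `v ∈ σ₁` and the apex `(p, -1)` if `v ∈ σ₂`. A common point
with `t > 0` forces every vertex into `σ₁`, one with `t < 0` forces every vertex into `σ₂`, and
on the hyperplane the new sets cut out exactly the old ones: the segment between the two apexes
meets it only in `(p, 0)`, and `p ∈ C v` whenever `v` received both apexes.
-/

open Set

/-- `X` is d-representable: it is the nerve of a family of compact convex sets in ℝ^d. -/
def IsRepresentable {α : Type*} (d : ℕ) (X : Set (Finset α)) : Prop :=
  ∃ C : α → Set (EuclideanSpace ℝ (Fin d)),
    (∀ v, IsCompact (C v) ∧ Convex ℝ (C v)) ∧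
      ∀ σ : Finset α, σ ∈ X ↔ (⋂ v ∈ σ, C v).Nonempty

section ConvexJoin

variable {𝕜 E : Type*} [AddCommGroup E] {s t : Set E}

theorem Convex.convexHull_union_eq_union_convexJoin [Field 𝕜] [LinearOrder 𝕜]
    [IsStrictOrderedRing 𝕜] [Module 𝕜 E] (hs : Convex 𝕜 s) (ht : Convex 𝕜 t) :
    convexHull 𝕜 (s ∪ t) = s ∪ t ∪ convexJoin 𝕜 s t := by
  rcases s.eq_empty_or_nonempty with rfl | hs₀
  · simp [ht.convexHull_eq]
  rcases t.eq_empty_or_nonempty with rfl | ht₀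
  · simp [hs.convexHull_eq]
  rw [hs.convexHull_union ht hs₀ ht₀,
    union_eq_right.mpr (union_subset (subset_convexJoin_left ht₀) (subset_convexJoin_right hs₀))]

theorem isCompact_convexJoin [Module ℝ E] [TopologicalSpace E] [IsTopologicalAddGroup E]
    [ContinuousSMul ℝ E] (hs : IsCompact s) (ht : IsCompact t) : IsCompact (convexJoin ℝ s t) := by
  have hst : convexJoin ℝ s t =
      (fun p : (ℝ × E) × E => (1 - p.1.1) • p.1.2 + p.1.1 • p.2) '' ((Icc 0 1 ×ˢ s) ×ˢ t) := by
    ext z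
    simp only [mem_convexJoin, mem_image, mem_prod, segment_eq_image, Prod.exists]
    constructor
    · rintro ⟨a, ha, b, hb, θ, hθ, rfl⟩
      exact ⟨θ, a, b, ⟨⟨hθ, ha⟩, hb⟩, rfl⟩
    · rintro ⟨θ, a, b, ⟨⟨hθ, ha⟩, hb⟩, rfl⟩
      exact ⟨a, ha, b, hb, θ, hθ, rfl⟩
  rw [hst]
  exact ((isCompact_Icc.prod hs).prod ht).image (by fun_prop)

theorem convexHull_union_inter_zeroSet_subset [Field 𝕜] [LinearOrder 𝕜] [IsStrictOrderedRing 𝕜]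
    [Module 𝕜 E] (f : E →ₗ[𝕜] 𝕜) (hs : Convex 𝕜 s) (ht : Convex 𝕜 t) (hsf : ∀ x ∈ s, f x = 0)
    (htf : t ∩ {x | f x = 0} ⊆ s) :
    convexHull 𝕜 (s ∪ t) ∩ {x | f x = 0} ⊆ s := by
  rintro z ⟨hz, hfz⟩
  rw [hs.convexHull_union_eq_union_convexJoin ht] at hz
  rcases hz with (hz | hz) | hz
  · exact hz
  · exact htf ⟨hz, hfz⟩
  obtain ⟨a, ha, b, hb, θa, θb, hθa, hθb, hθ, rfl⟩ := mem_convexJoin.mp hz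
  have hfb : θb * f b = 0 := by simpa [hsf a ha] using hfz
  rcases mul_eq_zero.mp hfb with hθb0 | hfb0
  · simpa [hθb0, show θa = 1 by linarith] using ha
  · exact hs.segment_subset ha (htf ⟨hb, hfb0⟩) ⟨θa, θb, hθa, hθb, hθ, rfl⟩

end ConvexJoin

def nerve {α E : Type*} (C : α → Set E) : Set (Finset α) :=
  {σ | (⋂ v ∈ σ, C v).Nonempty}

theorem isRepresentable_nerve {α F : Type*} [NormedAddCommGroup F] [NormedSpace ℝ F]
    [FiniteDimensional ℝ F] (C : α → Set F) (hC : ∀ v, IsCompact (C v) ∧ Convex ℝ (C v)) :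
    IsRepresentable (Module.finrank ℝ F) (nerve C) := by
  let e : F ≃L[ℝ] EuclideanSpace ℝ (Fin (Module.finrank ℝ F)) :=
    (LinearEquiv.ofFinrankEq _ _ (by simp)).toContinuousLinearEquiv
  refine ⟨fun v => e '' C v,
    fun v => ⟨(hC v).1.image e.continuous, (hC v).2.linear_image e.toLinearMap⟩, fun σ => ?_⟩
  rw [← image_iInter₂ e.bijective, image_nonempty]
  rfl

section Apexes

variable {α E : Type*} (σ₁ σ₂ : Finset α) (p : E) {v : α}

def apexes (v : α) : Set (E × ℝ) :=
  {x | v ∈ σ₁ ∧ x = (p, 1) ∨ v ∈ σ₂ ∧ x = (p, -1)}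

def apexHull [AddCommGroup E] [Module ℝ E] (C : α → Set E) (v : α) : Set (E × ℝ) :=
  convexHull ℝ (C v ×ˢ {0} ∪ apexes σ₁ σ₂ p v)

variable {σ₁ σ₂ p}

theorem apexes_subset_pos (hv : v ∉ σ₂) : apexes σ₁ σ₂ p v ⊆ {x | 0 < x.2} := by
  rintro x (⟨-, rfl⟩ | ⟨hv', -⟩)
  · exact zero_lt_one' ℝ
  · exact absurd hv' hv

theorem apexes_subset_neg (hv : v ∉ σ₁) : apexes σ₁ σ₂ p v ⊆ {x | x.2 < 0} := by
  rintro x (⟨hv', -⟩ | ⟨-, rfl⟩)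
  · exact absurd hv' hv
  · exact neg_one_lt_zero (R := ℝ)

variable [AddCommGroup E] [Module ℝ E]

theorem apexHull_subset_nonneg (C : α → Set E) (hv : v ∉ σ₂) :
    apexHull σ₁ σ₂ p C v ⊆ {x | 0 ≤ x.2} := by
  refine convexHull_min (union_subset ?_ ?_) (convex_halfSpace_ge (LinearMap.snd ℝ E ℝ).isLinear 0)
  · rintro x ⟨-, hx⟩
    exact (mem_singleton_iff.mp hx).ge
  · exact fun x hx => mem_ofPred.mpr (apexes_subset_pos hv hx).le

theorem apexHull_subset_nonpos (C : α → Set E) (hv : v ∉ σ₁) :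
    apexHull σ₁ σ₂ p C v ⊆ {x | x.2 ≤ 0} := by
  refine convexHull_min (union_subset ?_ ?_) (convex_halfSpace_le (LinearMap.snd ℝ E ℝ).isLinear 0)
  · rintro x ⟨-, hx⟩
    exact (mem_singleton_iff.mp hx).le
  · exact fun x hx => mem_ofPred.mpr (apexes_subset_neg hv hx).le

theorem convexHull_apexes_inter_zeroSet_subset {C : α → Set E}
    (hp : v ∈ σ₁ → v ∈ σ₂ → p ∈ C v) :
    convexHull ℝ (apexes σ₁ σ₂ p v) ∩ {x | x.2 = 0} ⊆ C v ×ˢ {0} := by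
  rintro z ⟨hz, hz₂⟩
  by_cases h₂ : v ∈ σ₂
  swap
  · have hpos : 0 < z.2 := convexHull_min (apexes_subset_pos h₂)
      (convex_halfSpace_gt (LinearMap.snd ℝ E ℝ).isLinear 0) hz
    exact absurd hz₂ hpos.ne'
  by_cases h₁ : v ∈ σ₁
  swap
  · have hneg : z.2 < 0 := convexHull_min (apexes_subset_neg h₁)
      (convex_halfSpace_lt (LinearMap.snd ℝ E ℝ).isLinear 0) hz
    exact absurd hz₂ hneg.ne
  have hz₁ : z.1 = p := by
    refine convexHull_min (s := apexes σ₁ σ₂ p v) (t := {x | x.1 = p}) ?_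
      ((convex_singleton p).linear_preimage (LinearMap.fst ℝ E ℝ)) hz
    rintro x (⟨-, rfl⟩ | ⟨-, rfl⟩) <;> rfl
  exact ⟨hz₁ ▸ hp h₁ h₂, hz₂⟩

theorem apexHull_inter_zeroSet_subset {C : α → Set E} (hC : Convex ℝ (C v))
    (hp : v ∈ σ₁ → v ∈ σ₂ → p ∈ C v) :
    apexHull σ₁ σ₂ p C v ∩ {x | x.2 = 0} ⊆ C v ×ˢ {0} := by
  rw [apexHull, ← convexHull_convexHull_union_right]
  exact convexHull_union_inter_zeroSet_subset (LinearMap.snd ℝ E ℝ)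
    (hC.prod (convex_singleton 0)) (convex_convexHull ℝ _) (fun x hx => hx.2)
    (convexHull_apexes_inter_zeroSet_subset hp)

theorem isCompact_apexHull [TopologicalSpace E] [IsTopologicalAddGroup E] [ContinuousSMul ℝ E]
    {C : α → Set E} (hCc : IsCompact (C v)) (hC : Convex ℝ (C v)) :
    IsCompact (apexHull σ₁ σ₂ p C v) := by
  have hfin : (apexes σ₁ σ₂ p v).Finite :=
    (toFinite {(p, 1), (p, -1)}).subset (by rintro x (⟨-, rfl⟩ | ⟨-, rfl⟩) <;> simp)
  have hKc := hCc.prod (isCompact_singleton (x := (0 : ℝ)))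
  have hTc := hfin.isCompact_convexHull ℝ
  rw [apexHull, ← convexHull_convexHull_union_right,
    (hC.prod (convex_singleton 0)).convexHull_union_eq_union_convexJoin (convex_convexHull ℝ _)]
  exact (hKc.union hTc).union (isCompact_convexJoin hKc hTc)

end Apexes

section Nerve

variable {α E : Type*} [AddCommGroup E] [Module ℝ E] {σ₁ σ₂ : Finset α} {p : E} {C : α → Set E}

theorem subset_nerve_apexHull :
    nerve C ∪ {σ | σ ⊆ σ₁} ∪ {σ | σ ⊆ σ₂} ⊆ nerve (apexHull σ₁ σ₂ p C) := by
  rintro σ ((⟨x, hx⟩ | hσ₁) | hσ₂)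
  · refine ⟨(x, 0), mem_iInter₂.mpr fun v hv => subset_convexHull ℝ _ (Or.inl ?_)⟩
    exact ⟨mem_iInter₂.mp hx v hv, rfl⟩
  · exact ⟨(p, 1), mem_iInter₂.mpr fun v hv =>
      subset_convexHull ℝ _ (Or.inr (Or.inl ⟨hσ₁ hv, rfl⟩))⟩
  · exact ⟨(p, -1), mem_iInter₂.mpr fun v hv =>
      subset_convexHull ℝ _ (Or.inr (Or.inr ⟨hσ₂ hv, rfl⟩))⟩

theorem nerve_apexHull_subset (hC : ∀ v, Convex ℝ (C v)) (hp : ∀ v ∈ σ₁, v ∈ σ₂ → p ∈ C v) :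
    nerve (apexHull σ₁ σ₂ p C) ⊆ nerve C ∪ {σ | σ ⊆ σ₁} ∪ {σ | σ ⊆ σ₂} := by
  rintro σ ⟨z, hz⟩
  have hzv : ∀ v ∈ σ, z ∈ apexHull σ₁ σ₂ p C v := mem_iInter₂.mp hz
  rcases lt_trichotomy z.2 0 with hneg | hzero | hpos
  · refine Or.inr fun v hv => ?_
    by_contra hv₂
    exact (apexHull_subset_nonneg C hv₂ (hzv v hv)).not_gt hneg
  · refine Or.inl (Or.inl ⟨z.1, mem_iInter₂.mpr fun v hv => ?_⟩)
    exact (apexHull_inter_zeroSet_subset (hC v) (hp v) ⟨hzv v hv, hzero⟩).1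
  · refine Or.inl (Or.inr fun v hv => ?_)
    by_contra hv₁
    exact (apexHull_subset_nonpos C hv₁ (hzv v hv)).not_gt hpos

theorem nerve_apexHull (hC : ∀ v, Convex ℝ (C v)) (hp : ∀ v ∈ σ₁, v ∈ σ₂ → p ∈ C v) :
    nerve (apexHull σ₁ σ₂ p C) = nerve C ∪ {σ | σ ⊆ σ₁} ∪ {σ | σ ⊆ σ₂} :=
  (nerve_apexHull_subset hC hp).antisymm subset_nerve_apexHull

end Nerve

theorem representable_add_two_simplices_general {α : Type*} [DecidableEq α]
    (d : ℕ) (X : Set (Finset α)) (hX : IsRepresentable d X)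
    (σ₁ σ₂ : Finset α) (h : σ₁ ∩ σ₂ ∈ X) :
    IsRepresentable (d + 1)
      (X ∪ {σ : Finset α | σ ⊆ σ₁} ∪ {σ : Finset α | σ ⊆ σ₂}) := by
  obtain ⟨C, hC, hXC⟩ := hX
  obtain ⟨p, hp⟩ := (hXC _).mp h
  have hpC : ∀ v ∈ σ₁, v ∈ σ₂ → p ∈ C v := fun v h₁ h₂ =>
    mem_iInter₂.mp hp v (Finset.mem_inter.mpr ⟨h₁, h₂⟩)
  have hrep := isRepresentable_nerve (apexHull σ₁ σ₂ p C) fun v =>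
    ⟨isCompact_apexHull (hC v).1 (hC v).2, convex_convexHull ℝ _⟩
  rwa [nerve_apexHull (fun v => (hC v).2) hpC, show nerve C = X from (Set.ext hXC).symm,
    Module.finrank_prod, finrank_euclideanSpace_fin, Module.finrank_self] at hrep

/-- If `X` is d-representable and `σ₁ ∩ σ₂ ∈ X`, then the complex obtained
from `X` by adding all subsets of `σ₁` and all subsets of `σ₂` is (d+1)-representable. -/
theorem representable_add_two_simplices {α : Type*} [Fintype α] [DecidableEq α]
    (d : ℕ) (X : Set (Finset α)) (hX : IsRepresentable d X)
    (σ₁ σ₂ : Finset α) (h : σ₁ ∩ σ₂ ∈ X) :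
    IsRepresentable (d + 1)
      (X ∪ {σ : Finset α | σ ⊆ σ₁} ∪ {σ : Finset α | σ ⊆ σ₂}) :=
  representable_add_two_simplices_general d X hX σ₁ σ₂ h
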